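/- arXiv:1805.11331 — 4 statements merged into one kernel-verified Lean document; each statement's English description precedes it below -/
import Mathlib

section
/- Let C_* be a chain complex of finite-dimensional vector spaces with boundary d, and D_* a graded subspace. With Inf_n(D) = D_n ∩ d_n^{-1}(D_{n-1}) and Sup_n(D) = D_n + d_{n+1}(D_{n+1}), the inclusion ι : Inf_*(D) → Sup_*(D) is a chain map inducing an isomorphism on homology in every degree. -/
/-- The comparison map from the degree-`n` homology of the infimum chain complex to the
degree-`n` homology of the supremum chain complex, induced by the inclusion
`Inf_* ⊆ Sup_*`.  Locally `C0,C1,C2,C3` are degrees `n-1,n,n+1,n+2`, `d1 = d_n`,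
`d2 = d_{n+1}`, `d3 = d_{n+2}`.  Cycles of `Inf` at degree `n` are `ker d1 ⊓ Inf_n`,
boundaries are `d2(Inf_{n+1})`; similarly for `Sup`. -/
noncomputable def homCompare {𝕜 C0 C1 C2 C3 : Type*} [Field 𝕜]
    [AddCommGroup C0] [Module 𝕜 C0] [FiniteDimensional 𝕜 C0]
    [AddCommGroup C1] [Module 𝕜 C1] [FiniteDimensional 𝕜 C1]
    [AddCommGroup C2] [Module 𝕜 C2] [FiniteDimensional 𝕜 C2]
    [AddCommGroup C3] [Module 𝕜 C3] [FiniteDimensional 𝕜 C3]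
    (d1 : C1 →ₗ[𝕜] C0) (d2 : C2 →ₗ[𝕜] C1) (d3 : C3 →ₗ[𝕜] C2)
    (D0 : Submodule 𝕜 C0) (D1 : Submodule 𝕜 C1)
    (D2 : Submodule 𝕜 C2) (D3 : Submodule 𝕜 C3) :
    ↥(LinearMap.ker d1 ⊓ (D1 ⊓ Submodule.comap d1 D0)) →ₗ[𝕜]
      (↥(LinearMap.ker d1 ⊓ (D1 ⊔ Submodule.map d2 D2)) ⧸
        (Submodule.map d2 (D2 ⊔ Submodule.map d3 D3)).comap
          (LinearMap.ker d1 ⊓ (D1 ⊔ Submodule.map d2 D2)).subtype) :=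
  ((Submodule.map d2 (D2 ⊔ Submodule.map d3 D3)).comap
      (LinearMap.ker d1 ⊓ (D1 ⊔ Submodule.map d2 D2)).subtype).mkQ ∘ₗ
    Submodule.inclusion (inf_le_inf_left _ (inf_le_left.trans le_sup_left))

/-!
Since `d ∘ d = 0`, the summand `d(D_{n+1})` of `Sup_n` consists of cycles, so by the modular law
a cycle of `Sup_n` is a cycle of `D_n`, which lies in `Inf_n`, plus a boundary of `Sup_*`: this
gives surjectivity. For the same reason `d(Sup_{n+1}) = d(D_{n+1})`, and an element of `Inf_n`
lying in `d(D_{n+1})` is the boundary of an element of `D_{n+1} ∩ d⁻¹(D_n) = Inf_{n+1}`.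
-/

namespace Submodule

variable {R M N P : Type*} [Ring R] [AddCommGroup M] [Module R M] [AddCommGroup N] [Module R N]
  [AddCommGroup P] [Module R P]

theorem map_le_ker_of_comp_eq_zero {f : M →ₗ[R] N} {g : N →ₗ[R] P} (h : g ∘ₗ f = 0)
    (p : Submodule R M) : p.map f ≤ LinearMap.ker g :=
  LinearMap.map_le_range.trans (LinearMap.range_le_ker_iff.mpr h)

theorem map_sup_map_of_comp_eq_zero {f : M →ₗ[R] N} {g : N →ₗ[R] P} (h : g ∘ₗ f = 0)
    (p : Submodule R N) (q : Submodule R M) : (p ⊔ q.map f).map g = p.map g := by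
  rw [map_sup, ← map_comp, h, Submodule.map_zero, sup_bot_eq]

end Submodule

open Submodule

section homCompare

variable {𝕜 C0 C1 C2 C3 : Type*} [Field 𝕜]
  [AddCommGroup C0] [Module 𝕜 C0] [FiniteDimensional 𝕜 C0]
  [AddCommGroup C1] [Module 𝕜 C1] [FiniteDimensional 𝕜 C1]
  [AddCommGroup C2] [Module 𝕜 C2] [FiniteDimensional 𝕜 C2]
  [AddCommGroup C3] [Module 𝕜 C3] [FiniteDimensional 𝕜 C3]
  {d1 : C1 →ₗ[𝕜] C0} {d2 : C2 →ₗ[𝕜] C1} (d3 : C3 →ₗ[𝕜] C2)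
  (D0 : Submodule 𝕜 C0) (D1 : Submodule 𝕜 C1) (D2 : Submodule 𝕜 C2) (D3 : Submodule 𝕜 C3)

theorem homCompare_surjective (h12 : d1 ∘ₗ d2 = 0) :
    Function.Surjective (homCompare d1 d2 d3 D0 D1 D2 D3) := by
  intro y
  obtain ⟨⟨x, hx⟩, rfl⟩ := Submodule.Quotient.mk_surjective _ y
  have hx' : x ∈ LinearMap.ker d1 ⊓ D1 ⊔ map d2 D2 := by
    rwa [inf_sup_assoc_of_le D1 (map_le_ker_of_comp_eq_zero h12 D2)]
  obtain ⟨u, ⟨hu_cycle, hu⟩, _, ⟨w, hw, rfl⟩, rfl⟩ := mem_sup.mp hx'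
  have hu_inf : u ∈ LinearMap.ker d1 ⊓ (D1 ⊓ comap d1 D0) :=
    mem_inf.mpr ⟨hu_cycle, mem_inf.mpr ⟨hu, by simp [LinearMap.mem_ker.mp hu_cycle]⟩⟩
  exact ⟨⟨u, hu_inf⟩, (Submodule.Quotient.eq _).mpr ⟨-w, neg_mem (mem_sup_left hw), by simp⟩⟩

theorem ker_homCompare (h23 : d2 ∘ₗ d3 = 0) :
    LinearMap.ker (homCompare d1 d2 d3 D0 D1 D2 D3)
      = (map d2 (D2 ⊓ comap d2 D1)).comap (LinearMap.ker d1 ⊓ (D1 ⊓ comap d1 D0)).subtype := by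
  ext ⟨x, -, hx, -⟩
  simp only [LinearMap.mem_ker, homCompare, LinearMap.comp_apply, mkQ_apply,
    Quotient.mk_eq_zero, mem_comap, coe_subtype, coe_inclusion,
    map_sup_map_of_comp_eq_zero h23, ← map_inf_eq_map_inf_comap, mem_inf]
  exact (and_iff_left hx).symm

end homCompare

/-- the inclusion `Inf_*(D) → Sup_*(D)` is a chain map inducing an
isomorphism on homology in every degree: the composite of the inclusion of cycles
with the quotient by boundaries of `Sup` is surjective, with kernel exactly the
boundaries of `Inf`. -/
theorem stmt6 {𝕜 C0 C1 C2 C3 : Type*} [Field 𝕜]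
    [AddCommGroup C0] [Module 𝕜 C0] [FiniteDimensional 𝕜 C0]
    [AddCommGroup C1] [Module 𝕜 C1] [FiniteDimensional 𝕜 C1]
    [AddCommGroup C2] [Module 𝕜 C2] [FiniteDimensional 𝕜 C2]
    [AddCommGroup C3] [Module 𝕜 C3] [FiniteDimensional 𝕜 C3]
    (d1 : C1 →ₗ[𝕜] C0) (d2 : C2 →ₗ[𝕜] C1) (d3 : C3 →ₗ[𝕜] C2)
    (h12 : d1 ∘ₗ d2 = 0) (h23 : d2 ∘ₗ d3 = 0)
    (D0 : Submodule 𝕜 C0) (D1 : Submodule 𝕜 C1)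
    (D2 : Submodule 𝕜 C2) (D3 : Submodule 𝕜 C3) :
    Function.Surjective (homCompare d1 d2 d3 D0 D1 D2 D3) ∧
    LinearMap.ker (homCompare d1 d2 d3 D0 D1 D2 D3)
      = (Submodule.map d2 (D2 ⊓ Submodule.comap d2 D1)).comap
          (LinearMap.ker d1 ⊓ (D1 ⊓ Submodule.comap d1 D0)).subtype :=
  ⟨homCompare_surjective d3 D0 D1 D2 D3 h12, ker_homCompare d3 D0 D1 D2 D3 h23⟩
end

section
/- Let C_* be a chain complex of finite-dimensional inner product spaces with boundary d and D_* a graded subspace, Inf_n = D_n ∩ d_n^{-1}(D_{n-1}). Let L_n^{Inf,up} = (d_n|_{Inf})*(d_n|_{Inf}) and let L_n^{up} = d_n* d_n be the full up-Laplacian. If v ∈ Inf_n satisfies L_n^{up} v = λ v for some scalar λ, then λ is an eigenvalue of L_n^{Inf,up} with eigenvector v; in particular every quasi-eigenvalue of L_n^{up} restricted to Inf_n is an eigenvalue of L_n^{Inf,up}. -/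
section InfLaplacian

variable {𝕜 Cm C0 C1 : Type*} [RCLike 𝕜]
  [NormedAddCommGroup Cm] [InnerProductSpace 𝕜 Cm] [FiniteDimensional 𝕜 Cm]
  [NormedAddCommGroup C0] [InnerProductSpace 𝕜 C0] [FiniteDimensional 𝕜 C0]
  [NormedAddCommGroup C1] [InnerProductSpace 𝕜 C1] [FiniteDimensional 𝕜 C1]

/-- The boundary maps the infimum space `Inf_n = D_n ∩ d_n⁻¹(D_{n-1})` into
`Inf_{n-1} = D_{n-1} ∩ d_{n-1}⁻¹(D_{n-2})`. -/
theorem inf_closed (d0 : C0 →ₗ[𝕜] Cm) (d1 : C1 →ₗ[𝕜] C0) (hdd : d0 ∘ₗ d1 = 0)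
    (Dm : Submodule 𝕜 Cm) (D0 : Submodule 𝕜 C0) (D1 : Submodule 𝕜 C1) :
    ∀ x ∈ D1 ⊓ Submodule.comap d1 D0, d1 x ∈ D0 ⊓ Submodule.comap d0 Dm := by
  intro x hx
  rcases Submodule.mem_inf.mp hx with ⟨_, h2⟩
  refine Submodule.mem_inf.mpr ⟨Submodule.mem_comap.mp h2, Submodule.mem_comap.mpr ?_⟩
  have hz : d0 (d1 x) = 0 := by simpa using LinearMap.congr_fun hdd x
  rw [hz]
  exact Dm.zero_mem

/-- The restriction `d_n|_{Inf} : Inf_n → Inf_{n-1}` of the boundary map to the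
infimum chain complex. -/
noncomputable def dInf (d0 : C0 →ₗ[𝕜] Cm) (d1 : C1 →ₗ[𝕜] C0) (hdd : d0 ∘ₗ d1 = 0)
    (Dm : Submodule 𝕜 Cm) (D0 : Submodule 𝕜 C0) (D1 : Submodule 𝕜 C1) :
    ↥(D1 ⊓ Submodule.comap d1 D0) →ₗ[𝕜] ↥(D0 ⊓ Submodule.comap d0 Dm) :=
  d1.restrict (inf_closed d0 d1 hdd Dm D0 D1)

end InfLaplacian

namespace LinearMap

variable {𝕜 E F : Type*} [RCLike 𝕜]
  [NormedAddCommGroup E] [InnerProductSpace 𝕜 E] [FiniteDimensional 𝕜 E]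
  [NormedAddCommGroup F] [InnerProductSpace 𝕜 F] [FiniteDimensional 𝕜 F]
  (f : E →ₗ[𝕜] F) {p : Submodule 𝕜 E} {q : Submodule 𝕜 F} (h : ∀ x ∈ p, f x ∈ q)

theorem adjoint_restrict_apply (y : q) :
    adjoint (f.restrict h) y = p.orthogonalProjectionOnto (adjoint f y) := by
  refine ext_inner_left 𝕜 fun w => ?_
  rw [adjoint_inner_right, Submodule.inner_orthogonalProjectionOnto_eq_of_mem_left,
    adjoint_inner_right]
  rfl

theorem adjoint_comp_restrict_apply (x : p) :
    (adjoint (f.restrict h) ∘ₗ f.restrict h) x = p.orthogonalProjectionOnto (adjoint f (f x)) :=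
  adjoint_restrict_apply f h _

theorem adjoint_comp_restrict_apply_eq_smul {μ : 𝕜} {v : E} (hv : v ∈ p)
    (hfv : adjoint f (f v) = μ • v) :
    (adjoint (f.restrict h) ∘ₗ f.restrict h) ⟨v, hv⟩ = μ • (⟨v, hv⟩ : p) := by
  rw [adjoint_comp_restrict_apply, Submodule.coe_mk, hfv, map_smul,
    Submodule.orthogonalProjectionOnto_mem_subspace_eq_self (K := p) ⟨v, hv⟩]

end LinearMap

-- `Cm`, `C0`, `C1` are the degrees `n-2`, `n-1`, `n`, with `d0 = d_{n-1}` and `d1 = d_n`.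
/-- if `v ∈ Inf_n` satisfies `L_n^{up} v = λ v` for the full up-Laplacian
`L_n^{up} = d_n* d_n`, then `v`, viewed in `Inf_n`, is a `λ`-eigenvector of the
infimum up-Laplacian `L_n^{Inf,up} = (d_n|_{Inf})* (d_n|_{Inf})`.
Locally `Cm,C0,C1` are degrees `n-2,n-1,n`, `d0 = d_{n-1}`, `d1 = d_n`. -/
theorem stmt15 {𝕜 Cm C0 C1 : Type*} [RCLike 𝕜]
    [NormedAddCommGroup Cm] [InnerProductSpace 𝕜 Cm] [FiniteDimensional 𝕜 Cm]
    [NormedAddCommGroup C0] [InnerProductSpace 𝕜 C0] [FiniteDimensional 𝕜 C0]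
    [NormedAddCommGroup C1] [InnerProductSpace 𝕜 C1] [FiniteDimensional 𝕜 C1]
    (d0 : C0 →ₗ[𝕜] Cm) (d1 : C1 →ₗ[𝕜] C0) (hdd : d0 ∘ₗ d1 = 0)
    (Dm : Submodule 𝕜 Cm) (D0 : Submodule 𝕜 C0) (D1 : Submodule 𝕜 C1)
    (lam : 𝕜) (v : C1) (hv : v ∈ D1 ⊓ Submodule.comap d1 D0)
    (heig : LinearMap.adjoint d1 (d1 v) = lam • v) :
    (LinearMap.adjoint (dInf d0 d1 hdd Dm D0 D1) ∘ₗ dInf d0 d1 hdd Dm D0 D1)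
        ⟨v, hv⟩ = lam • (⟨v, hv⟩ : ↥(D1 ⊓ Submodule.comap d1 D0)) := by
  exact d1.adjoint_comp_restrict_apply_eq_smul (inf_closed d0 d1 hdd Dm D0 D1) hv heig
end

section
/- Let K be a finite abstract simplicial complex and φ a weight on K, i.e., a bilinear map φ : F(K) × F(K) → F satisfying φ(d_iσ, d_j d_iσ) φ(σ, d_iσ) = φ(d_jσ, d_j d_iσ) φ(σ, d_jσ) for all simplices σ and all j < i. Define ∂_n^φ(σ) = Σ_{i=0}^n (−1)^i φ(σ, d_iσ) d_iσ on the free vector space on n-simplices. Then ∂_{n-1}^φ ∘ ∂_n^φ = 0. -/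
/-!
Expanding `∂^φ ∂^φ σ` gives a sum over ordered pairs `(v, u)` of distinct vertices of `σ`, the
term of `(v, u)` being a multiple of the face `σ \ {u, v}`. For `u < v` the two terms `(v, u)` and
`(u, v)` carry the weights `φ(σ, σ \ v) φ(σ \ v, σ \ {u, v})` and `φ(σ, σ \ u) φ(σ \ u, σ \ {u, v})`,
which agree by the weight condition, while their signs are opposite: removing `v` does not move the
position of `u`, but removing `u` moves `v` one place down. Hence the terms cancel in pairs.
-/

/-- The `φ`-weighted simplicial boundary operator on the free vector space on the
finite subsets of a linearly ordered vertex type `V`: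
`∂^φ σ = Σ_{v ∈ σ} (−1)^{idx σ v} φ(σ, σ \ v) (σ \ v)`,
where `idx σ v` is the position of `v` among the vertices of `σ` (so `σ \ v = d_i σ`),
and the boundary of a `0`-simplex is `0`. -/
noncomputable def wbd (𝕜 : Type*) [RCLike 𝕜] {V : Type*} [LinearOrder V]
    (phi : Finset V → Finset V → 𝕜) :
    (Finset V →₀ 𝕜) →ₗ[𝕜] (Finset V →₀ 𝕜) :=
  Finsupp.lsum 𝕜 fun σ => LinearMap.toSpanSingleton 𝕜 _
    (if 2 ≤ σ.card then
        σ.sum fun v =>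
          ((-1 : 𝕜) ^ (σ.filter (· < v)).card * phi σ (σ.erase v)) •
            Finsupp.single (σ.erase v) (1 : 𝕜)
      else 0)

namespace Finset

variable {α M : Type*} [LinearOrder α] [AddCommMonoid M]

theorem sum_sum_erase_eq_zero_of_add_eq_zero (s : Finset α) (f : α → α → M)
    (h : ∀ a ∈ s, ∀ b ∈ s, a < b → f a b + f b a = 0) :
    ∑ a ∈ s, ∑ b ∈ s.erase a, f a b = 0 := by
  rw [sum_sigma']
  refine sum_involution (fun p _ => ⟨p.2, p.1⟩) ?_ ?_ ?_ fun _ _ => rfl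
  · rintro ⟨a, b⟩ hp
    obtain ⟨ha, hba, hb⟩ : a ∈ s ∧ b ≠ a ∧ b ∈ s := by simpa using hp
    rcases hba.lt_or_gt with hlt | hgt
    · rw [add_comm]; exact h b hb a ha hlt
    · exact h a ha b hb hgt
  · rintro ⟨a, b⟩ hp - hswap
    exact (mem_erase.mp (mem_sigma.mp hp).2).1 (congrArg Sigma.fst hswap)
  · rintro ⟨a, b⟩ hp
    obtain ⟨ha, hba, hb⟩ : a ∈ s ∧ b ≠ a ∧ b ∈ s := by simpa using hp
    simpa using ⟨hb, hba.symm, ha⟩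

theorem card_filter_lt_erase_of_lt (s : Finset α) {a b : α} (hab : a < b) :
    ((s.erase b).filter (· < a)).card = (s.filter (· < a)).card := by
  rw [filter_erase, erase_eq_of_notMem]
  simp only [mem_filter, not_and, not_lt]
  exact fun _ => hab.le

theorem card_filter_lt_erase_add_one_of_lt {s : Finset α} {a b : α} (ha : a ∈ s) (hab : a < b) :
    ((s.erase a).filter (· < b)).card + 1 = (s.filter (· < b)).card := by
  rw [filter_erase, card_erase_add_one (mem_filter.mpr ⟨ha, hab⟩)]

end Finset

section WeightedBoundary

variable {𝕜 V : Type*} [RCLike 𝕜] [LinearOrder V] (phi : Finset V → Finset V → 𝕜)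

open Finset

theorem wbd_single_of_two_le_card {τ : Finset V} (hτ : 2 ≤ τ.card) :
    wbd 𝕜 phi (Finsupp.single τ 1) =
      ∑ v ∈ τ, ((-1 : 𝕜) ^ (τ.filter (· < v)).card * phi τ (τ.erase v)) •
        Finsupp.single (τ.erase v) 1 := by
  simp [wbd, hτ]

theorem wbd_single_of_card_lt_two {τ : Finset V} (hτ : τ.card < 2) :
    wbd 𝕜 phi (Finsupp.single τ 1) = 0 := by
  simp [wbd, hτ]

noncomputable def wbdSqCoeff (σ : Finset V) (v u : V) : 𝕜 :=
  ((-1 : 𝕜) ^ (σ.filter (· < v)).card * phi σ (σ.erase v)) *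
    ((-1 : 𝕜) ^ ((σ.erase v).filter (· < u)).card * phi (σ.erase v) ((σ.erase v).erase u))

theorem wbd_wbd_single_of_three_le_card {σ : Finset V} (hσ : 3 ≤ σ.card) :
    wbd 𝕜 phi (wbd 𝕜 phi (Finsupp.single σ 1)) =
      ∑ v ∈ σ, ∑ u ∈ σ.erase v,
        wbdSqCoeff phi σ v u • Finsupp.single ((σ.erase v).erase u) 1 := by
  rw [wbd_single_of_two_le_card phi (by omega), map_sum]
  refine sum_congr rfl fun v hv => ?_
  have hcard : 2 ≤ (σ.erase v).card := by rw [card_erase_of_mem hv]; omega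
  rw [map_smul, wbd_single_of_two_le_card phi hcard, smul_sum]
  simp only [smul_smul, wbdSqCoeff]

theorem wbdSqCoeff_add_wbdSqCoeff_swap {σ : Finset V} {u v : V} (hu : u ∈ σ) (huv : u < v)
    (hphi : phi (σ.erase v) ((σ.erase v).erase u) * phi σ (σ.erase v)
        = phi (σ.erase u) ((σ.erase u).erase v) * phi σ (σ.erase u)) :
    wbdSqCoeff phi σ u v + wbdSqCoeff phi σ v u = 0 := by
  unfold wbdSqCoeff
  rw [card_filter_lt_erase_of_lt σ huv, ← card_filter_lt_erase_add_one_of_lt hu huv, pow_succ]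
  linear_combination -((-1 : 𝕜) ^ (σ.filter (· < u)).card *
    (-1 : 𝕜) ^ ((σ.erase u).filter (· < v)).card) * hphi

theorem wbd_wbd_single {σ : Finset V}
    (hphi : ∀ u ∈ σ, ∀ v ∈ σ, u < v →
      phi (σ.erase v) ((σ.erase v).erase u) * phi σ (σ.erase v)
        = phi (σ.erase u) ((σ.erase u).erase v) * phi σ (σ.erase u)) :
    wbd 𝕜 phi (wbd 𝕜 phi (Finsupp.single σ 1)) = 0 := by
  rcases lt_or_ge σ.card 3 with hσ | hσ
  · rcases lt_or_ge σ.card 2 with hσ' | hσ'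
    · rw [wbd_single_of_card_lt_two phi hσ', map_zero]
    rw [wbd_single_of_two_le_card phi hσ', map_sum]
    refine sum_eq_zero fun v hv => ?_
    rw [map_smul, wbd_single_of_card_lt_two phi (by rw [card_erase_of_mem hv]; omega), smul_zero]
  rw [wbd_wbd_single_of_three_le_card phi hσ]
  refine sum_sum_erase_eq_zero_of_add_eq_zero σ _ fun u hu v hv huv => ?_
  rw [erase_right_comm (s := σ) (a := v), ← add_smul,
    wbdSqCoeff_add_wbdSqCoeff_swap phi hu huv (hphi u hu v hv huv), zero_smul]

end WeightedBoundary

theorem stmt16_general {𝕜 V : Type*} [RCLike 𝕜] [LinearOrder V]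
    (K : Set (Finset V))
    (phi : Finset V → Finset V → 𝕜)
    (hphi : ∀ σ ∈ K, ∀ u ∈ σ, ∀ v ∈ σ, u < v →
      phi (σ.erase v) ((σ.erase v).erase u) * phi σ (σ.erase v)
        = phi (σ.erase u) ((σ.erase u).erase v) * phi σ (σ.erase u)) :
    ∀ σ ∈ K, wbd 𝕜 phi (wbd 𝕜 phi (Finsupp.single σ 1)) = 0 :=
  fun σ hσ => wbd_wbd_single phi (hphi σ hσ)

/-- for a weight `φ` on a finite simplicial complex `K` (i.e. satisfying
`φ(d_iσ, d_j d_iσ) φ(σ, d_iσ) = φ(d_jσ, d_j d_iσ) φ(σ, d_jσ)` for all `σ ∈ K`, `j < i`),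
the weighted boundary satisfies `∂^φ ∘ ∂^φ = 0` on the chains of `K`. -/
theorem stmt16 {𝕜 V : Type*} [RCLike 𝕜] [LinearOrder V]
    (K : Set (Finset V)) (hfin : K.Finite)
    (hne : ∀ s ∈ K, s.Nonempty)
    (hdown : ∀ s ∈ K, ∀ t ⊆ s, t.Nonempty → t ∈ K)
    (phi : Finset V → Finset V → 𝕜)
    (hphi : ∀ σ ∈ K, ∀ u ∈ σ, ∀ v ∈ σ, u < v →
      phi (σ.erase v) ((σ.erase v).erase u) * phi σ (σ.erase v)
        = phi (σ.erase u) ((σ.erase u).erase v) * phi σ (σ.erase u)) :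
    ∀ σ ∈ K, wbd 𝕜 phi (wbd 𝕜 phi (Finsupp.single σ 1)) = 0 :=
  stmt16_general K phi hphi
end

section
/- Let K be a finite abstract simplicial complex, w : K → (0,∞), and φ_w(σ,τ) = C·w(σ)/w(τ) the induced weight. Let H be a hypergraph with ΔH = K and D_n the span of n-hyperedges. Then the map g_n sending Σ_k a_k σ_k to Σ_k (a_k / w(σ_k)) σ_k is a linear isomorphism from D_n ∩ Ker(∂_n) onto D_n ∩ Ker(∂_n^{φ_w}). -/
/-- The span of the `m`-vertex hyperedges of `H` inside the chains. -/
noncomputable def hspan (𝕜 : Type*) [RCLike 𝕜] {V : Type*} [LinearOrder V]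
    (H : Set (Finset V)) (m : ℕ) : Submodule 𝕜 (Finset V →₀ 𝕜) :=
  Submodule.span 𝕜 {f | ∃ σ ∈ H, σ.card = m ∧ f = Finsupp.single σ 1}

/-- The rescaling map `g : Σ_k a_k σ_k ↦ Σ_k (a_k / w(σ_k)) σ_k` on chains. -/
noncomputable def gmap (𝕜 : Type*) [RCLike 𝕜] {V : Type*} [LinearOrder V]
    (w : Finset V → ℝ) : (Finset V →₀ 𝕜) →ₗ[𝕜] (Finset V →₀ 𝕜) :=
  Finsupp.lsum 𝕜 fun σ => LinearMap.toSpanSingleton 𝕜 _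
    (((w σ : ℝ) : 𝕜)⁻¹ • Finsupp.single σ (1 : 𝕜))

/-!
The rescaling `g` is diagonal, with inverse the rescaling by `1 / w`, and it intertwines the two
boundaries up to diagonal rescalings: on chains of simplices of `K`,
`∂^{φ_w} ∘ g_w = g_{w/C} ∘ ∂` and `∂ ∘ g_{1/w} = g_{C/w} ∘ ∂^{φ_w}`, because the factor
`w(σ)/w(d_iσ)` in `φ_w` is exactly what conjugating by `g_w` produces (the second identity needs
`w ≠ 0` on the faces, i.e. that `K` is closed under faces). Hence `g_w` and `g_{1/w}`
map the two kernels into each other, and being mutually inverse on `D_n` they are bijections.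
-/

section Rescaling

variable {𝕜 V : Type*} [RCLike 𝕜] [LinearOrder V]

lemma gmap_single (w : Finset V → ℝ) (σ : Finset V) :
    gmap 𝕜 w (Finsupp.single σ 1) = ((w σ : ℝ) : 𝕜)⁻¹ • Finsupp.single σ 1 := by
  simp [gmap]

lemma gmap_apply (w : Finset V → ℝ) (f : Finset V →₀ 𝕜) (τ : Finset V) :
    gmap 𝕜 w f τ = ((w τ : ℝ) : 𝕜)⁻¹ * f τ := by
  induction f using Finsupp.induction_linear with
  | zero => simp
  | add f g hf hg => simp [hf, hg, mul_add]
  | single σ a =>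
    rcases eq_or_ne σ τ with rfl | h
    · simp [gmap, mul_comm]
    · simp [gmap, h]

lemma gmap_mem_supported (w : Finset V → ℝ) {S : Set (Finset V)} {f : Finset V →₀ 𝕜}
    (hf : f ∈ Finsupp.supported 𝕜 𝕜 S) : gmap 𝕜 w f ∈ Finsupp.supported 𝕜 𝕜 S := by
  rw [Finsupp.mem_supported'] at hf ⊢
  intro τ hτ
  rw [gmap_apply, hf τ hτ, mul_zero]

lemma gmap_gmap_of_mul_eq_one {u w : Finset V → ℝ} {S : Set (Finset V)}
    (huw : ∀ σ ∈ S, u σ * w σ = 1) {f : Finset V →₀ 𝕜}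
    (hf : f ∈ Finsupp.supported 𝕜 𝕜 S) : gmap 𝕜 u (gmap 𝕜 w f) = f := by
  ext τ
  rw [gmap_apply, gmap_apply, ← mul_assoc, ← mul_inv, ← RCLike.ofReal_mul]
  by_cases hτ : τ ∈ S
  · rw [huw τ hτ, RCLike.ofReal_one, inv_one, one_mul]
  · rw [(Finsupp.mem_supported' 𝕜 f).1 hf τ hτ, mul_zero]

lemma wbd_single (phi : Finset V → Finset V → 𝕜) (σ : Finset V) :
    wbd 𝕜 phi (Finsupp.single σ 1) =
      if 2 ≤ σ.card then
        σ.sum fun v =>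
          ((-1 : 𝕜) ^ (σ.filter (· < v)).card * phi σ (σ.erase v)) •
            Finsupp.single (σ.erase v) (1 : 𝕜)
      else 0 := by
  simp [wbd]

lemma wbd_gmap_eq_gmap_wbd {φ ψ : Finset V → Finset V → 𝕜} {u u' : Finset V → ℝ}
    {S : Set (Finset V)}
    (hface : ∀ σ ∈ S, 2 ≤ σ.card → ∀ v ∈ σ,
      ((u σ : ℝ) : 𝕜)⁻¹ * φ σ (σ.erase v) = ψ σ (σ.erase v) * ((u' (σ.erase v) : ℝ) : 𝕜)⁻¹)
    {f : Finset V →₀ 𝕜} (hf : f ∈ Finsupp.supported 𝕜 𝕜 S) :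
    wbd 𝕜 φ (gmap 𝕜 u f) = gmap 𝕜 u' (wbd 𝕜 ψ f) := by
  rw [Finsupp.supported_eq_span_single] at hf
  refine LinearMap.eqOn_span (f := wbd 𝕜 φ ∘ₗ gmap 𝕜 u) (g := gmap 𝕜 u' ∘ₗ wbd 𝕜 ψ) ?_ hf
  rintro _ ⟨σ, hσ, rfl⟩
  simp only [LinearMap.comp_apply, gmap_single, map_smul, wbd_single]
  split_ifs with hcard
  · simp only [map_sum, map_smul, gmap_single, Finset.smul_sum, smul_smul]
    refine Finset.sum_congr rfl fun v hv => ?_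
    rw [← mul_assoc, mul_comm _ ((-1 : 𝕜) ^ _), mul_assoc, hface σ hσ hcard v hv, mul_assoc]
  · simp

lemma mapsTo_gmap_inf_ker {φ ψ : Finset V → Finset V → 𝕜} {u u' : Finset V → ℝ}
    {S : Set (Finset V)}
    (h : ∀ f ∈ Finsupp.supported 𝕜 𝕜 S, wbd 𝕜 φ (gmap 𝕜 u f) = gmap 𝕜 u' (wbd 𝕜 ψ f)) :
    Set.MapsTo (gmap 𝕜 u)
      ((Finsupp.supported 𝕜 𝕜 S ⊓ LinearMap.ker (wbd 𝕜 ψ) : Submodule 𝕜 _) : Set _)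
      ((Finsupp.supported 𝕜 𝕜 S ⊓ LinearMap.ker (wbd 𝕜 φ) : Submodule 𝕜 _) : Set _) := by
  rintro f ⟨hf, hker⟩
  refine ⟨gmap_mem_supported u hf, ?_⟩
  rw [SetLike.mem_coe, LinearMap.mem_ker] at hker ⊢
  rw [h f hf, hker, map_zero]

lemma wbd_weight_gmap {C : ℝ} {w : Finset V → ℝ} {S : Set (Finset V)}
    (hw : ∀ σ ∈ S, w σ ≠ 0) {f : Finset V →₀ 𝕜} (hf : f ∈ Finsupp.supported 𝕜 𝕜 S) :
    wbd 𝕜 (fun σ τ => ((C * w σ / w τ : ℝ) : 𝕜)) (gmap 𝕜 w f) =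
      gmap 𝕜 (fun τ => w τ / C) (wbd 𝕜 (fun _ _ => (1 : 𝕜)) f) :=
  wbd_gmap_eq_gmap_wbd (fun σ hσ _ _ _ => by
    have : ((w σ : ℝ) : 𝕜) ≠ 0 := by exact_mod_cast hw σ hσ
    push_cast
    field_simp) hf

lemma wbd_one_gmap_inv {C : ℝ} (hC : C ≠ 0) {w : Finset V → ℝ} {S : Set (Finset V)}
    (hw : ∀ σ ∈ S, 2 ≤ σ.card → ∀ v ∈ σ, w (σ.erase v) ≠ 0)
    {f : Finset V →₀ 𝕜} (hf : f ∈ Finsupp.supported 𝕜 𝕜 S) :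
    wbd 𝕜 (fun _ _ => (1 : 𝕜)) (gmap 𝕜 (fun σ => (w σ)⁻¹) f) =
      gmap 𝕜 (fun τ => C / w τ) (wbd 𝕜 (fun σ τ => ((C * w σ / w τ : ℝ) : 𝕜)) f) :=
  wbd_gmap_eq_gmap_wbd (fun σ hσ hcard v hv => by
    have : ((w (σ.erase v) : ℝ) : 𝕜) ≠ 0 := by exact_mod_cast hw σ hσ hcard v hv
    have : ((C : ℝ) : 𝕜) ≠ 0 := by exact_mod_cast hC
    push_cast
    field_simp) hf

lemma hspan_eq_supported (H : Set (Finset V)) (m : ℕ) :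
    hspan 𝕜 H m = Finsupp.supported 𝕜 𝕜 {σ | σ ∈ H ∧ σ.card = m} := by
  rw [Finsupp.supported_eq_span_single, hspan]
  congr 1
  ext f
  constructor
  · rintro ⟨σ, hσ, hc, rfl⟩; exact ⟨σ, ⟨hσ, hc⟩, rfl⟩
  · rintro ⟨σ, ⟨hσ, hc⟩, rfl⟩; exact ⟨σ, hσ, hc, rfl⟩

end Rescaling

theorem stmt18_general {𝕜 V : Type*} [RCLike 𝕜] [LinearOrder V]
    (K : Set (Finset V))
    (hdown : ∀ s ∈ K, ∀ t ⊆ s, t.Nonempty → t ∈ K)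
    (w : Finset V → ℝ) (hw : ∀ s ∈ K, 0 < w s)
    (C : ℝ) (hC : 0 < C)
    (H : Set (Finset V)) (hH : H ⊆ K)
    (n : ℕ) :
    Set.BijOn (gmap 𝕜 w)
      ((hspan 𝕜 H (n + 1) ⊓ LinearMap.ker (wbd 𝕜 fun _ _ => (1 : 𝕜)) :
          Submodule 𝕜 (Finset V →₀ 𝕜)) : Set (Finset V →₀ 𝕜))
      ((hspan 𝕜 H (n + 1) ⊓
          LinearMap.ker (wbd 𝕜 fun σ τ => ((C * w σ / w τ : ℝ) : 𝕜)) :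
          Submodule 𝕜 (Finset V →₀ 𝕜)) : Set (Finset V →₀ 𝕜)) := by
  rw [hspan_eq_supported]
  have hwS : ∀ σ ∈ {σ | σ ∈ H ∧ σ.card = n + 1}, 0 < w σ := fun σ hσ => hw σ (hH hσ.1)
  have hw_face : ∀ σ ∈ {σ | σ ∈ H ∧ σ.card = n + 1}, 2 ≤ σ.card → ∀ v ∈ σ,
      w (σ.erase v) ≠ 0 := fun σ hσ hcard v hv =>
    (hw _ <| hdown σ (hH hσ.1) _ (Finset.erase_subset _ _) <| by
      rw [← Finset.card_pos, Finset.card_erase_of_mem hv]; omega).ne'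
  refine Set.InvOn.bijOn (f' := gmap 𝕜 fun σ => (w σ)⁻¹) ⟨?_, ?_⟩ ?_ ?_
  · rintro f ⟨hf, -⟩
    exact gmap_gmap_of_mul_eq_one (fun σ hσ => inv_mul_cancel₀ (hwS σ hσ).ne') hf
  · rintro f ⟨hf, -⟩
    exact gmap_gmap_of_mul_eq_one (fun σ hσ => mul_inv_cancel₀ (hwS σ hσ).ne') hf
  · exact mapsTo_gmap_inf_ker fun f => wbd_weight_gmap fun σ hσ => (hwS σ hσ).ne'
  · exact mapsTo_gmap_inf_ker fun f => wbd_one_gmap_inv hC.ne' hw_face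

/-- the map `g_n : Σ_k a_k σ_k ↦ Σ_k (a_k / w(σ_k)) σ_k` is a (linear)
bijection from `D_n ∩ Ker ∂_n` onto `D_n ∩ Ker ∂_n^{φ_w}`, where `∂` is the unweighted
boundary (constant weight `1`), `∂^{φ_w}` the boundary for the weight
`φ_w(σ,τ) = C·w(σ)/w(τ)`, and `D_n` is the span of the `n`-hyperedges of `H`. -/
theorem stmt18 {𝕜 V : Type*} [RCLike 𝕜] [LinearOrder V]
    (K : Set (Finset V)) (hfin : K.Finite)
    (hne : ∀ s ∈ K, s.Nonempty)
    (hdown : ∀ s ∈ K, ∀ t ⊆ s, t.Nonempty → t ∈ K)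
    (w : Finset V → ℝ) (hw : ∀ s ∈ K, 0 < w s)
    (C : ℝ) (hC : 0 < C)
    (H : Set (Finset V)) (hH : H ⊆ K)
    (hDelta : K = {t | t.Nonempty ∧ ∃ s ∈ H, t ⊆ s})
    (n : ℕ) :
    Set.BijOn (gmap 𝕜 w)
      ((hspan 𝕜 H (n + 1) ⊓ LinearMap.ker (wbd 𝕜 fun _ _ => (1 : 𝕜)) :
          Submodule 𝕜 (Finset V →₀ 𝕜)) : Set (Finset V →₀ 𝕜))
      ((hspan 𝕜 H (n + 1) ⊓
          LinearMap.ker (wbd 𝕜 fun σ τ => ((C * w σ / w τ : ℝ) : 𝕜)) :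
          Submodule 𝕜 (Finset V →₀ 𝕜)) : Set (Finset V →₀ 𝕜)) :=
  stmt18_general K hdown w hw C hC H hH n
end
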